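/- Let Y be a subset of the finite set X. Every transformation in Perm(Y) = {s ∈ S : Y·s = Y} is the realization of some concatenation of finitely many minimal straight permutator words of Y; that is, the words in the subsemigroup of T⁺ generated by M_S(Y) realize all elements of Perm(Y). -/

import Mathlib

/-- Realization of a word (list of generators), applied left to right. -/
def realize {X : Type*} (w : List (X → X)) : X → X :=
  fun x => w.foldl (fun a f => f a) x

/-- `w` is a word over the generator set `T`: a nonempty list of elements of `T`. -/
def IsWordOver {X : Type*} (T : Finset (X → X)) (w : List (X → X)) : Prop :=
  w ≠ [] ∧ ∀ f ∈ w, f ∈ T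

/-- A word is straight if no nonempty proper prefix realizes the identity, and distinct
nonempty prefixes realize distinct transformations. -/
def IsStraight {X : Type*} (w : List (X → X)) : Prop :=
  (∀ k, 1 ≤ k → k < w.length → realize (w.take k) ≠ id) ∧
  (∀ k l, 1 ≤ k → k ≤ w.length → 1 ≤ l → l ≤ w.length →
    realize (w.take k) = realize (w.take l) → k = l)

/-- The semigroup generated by `T`: all transformations realized by nonempty words over `T`. -/
def SgpGen {X : Type*} (T : Finset (X → X)) : Set (X → X) :=
  {s | ∃ w : List (X → X), IsWordOver T w ∧ realize w = s}

/-- A permutator word of `Y`: a word over `T` whose realization maps `Y` onto `Y`. -/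
def Permutator {X : Type*} (T : Finset (X → X)) (Y : Set X) (w : List (X → X)) : Prop :=
  IsWordOver T w ∧ realize w '' Y = Y

/-- A minimal permutator word of `Y`: a permutator word not factorizable into two
permutator words. -/
def MinPermutator {X : Type*} (T : Finset (X → X)) (Y : Set X) (w : List (X → X)) : Prop :=
  Permutator T Y w ∧ ¬ ∃ u v, w = u ++ v ∧ Permutator T Y u ∧ Permutator T Y v

/-- The full permutator semigroup `Perm(Y)` of elements of `⟨T⟩` mapping `Y` onto `Y`. -/
def PermSet {X : Type*} (T : Finset (X → X)) (Y : Set X) : Set (X → X) :=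
  {s | s ∈ SgpGen T ∧ s '' Y = Y}

/-!
Induction on the length of a permutator word `w`. If `w` factors into two permutator words,
apply induction to both factors. If it does not, it is a minimal permutator; either it is also
straight, or two of its prefixes `w.take k` and `w.take l` (with `k = 0` allowed, `w.take 0`
realizing the identity) have the same realization, and cutting out the factor between them
gives a strictly shorter permutator word with the same realization.
-/

section

variable {X : Type*}

theorem realize_append (u v : List (X → X)) :
    realize (u ++ v) = realize v ∘ realize u := by
  funext x
  simp [realize, List.foldl_append]

theorem realize_take_append_drop_of_eq {w : List (X → X)} {k l : ℕ}
    (h : realize (w.take k) = realize (w.take l)) :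
    realize (w.take k ++ w.drop l) = realize w := by
  rw [realize_append, h, ← realize_append, List.take_append_drop]

theorem exists_take_eq_take_of_not_isStraight {w : List (X → X)} (h : ¬ IsStraight w) :
    ∃ k l, k < l ∧ l ≤ w.length ∧ (0 < k ∨ l < w.length) ∧
      realize (w.take k) = realize (w.take l) := by
  simp only [IsStraight, not_and_or, not_forall, not_not, exists_prop] at h
  rcases h with ⟨l, hl, hlw, hid⟩ | ⟨k, l, hk, hkw, hl, hlw, heq, hne⟩
  · exact ⟨0, l, hl, hlw.le, Or.inr hlw, hid.symm⟩
  · rcases Nat.lt_or_gt_of_ne hne with hkl | hlk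
    · exact ⟨k, l, hkl, hlw, Or.inl hk, heq⟩
    · exact ⟨l, k, hlk, hkw, Or.inl hl, heq.symm⟩

theorem exists_shorter_of_not_isStraight {w : List (X → X)} (h : ¬ IsStraight w) :
    ∃ w', w' ≠ [] ∧ w' ⊆ w ∧ w'.length < w.length ∧ realize w' = realize w := by
  obtain ⟨k, l, hkl, hlw, hne, heq⟩ := exists_take_eq_take_of_not_isStraight h
  have hlen : (w.take k ++ w.drop l).length = k + (w.length - l) := by
    simp only [List.length_append, List.length_take, List.length_drop]
    omega
  refine ⟨w.take k ++ w.drop l, ?_, ?_, by omega, realize_take_append_drop_of_eq heq⟩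
  · rw [← List.length_pos_iff, hlen]
    omega
  · exact List.append_subset.2 ⟨List.take_subset k w, List.drop_subset l w⟩

variable {T : Finset (X → X)} {Y : Set X}

theorem Permutator.of_subset {w w' : List (X → X)} (hw : Permutator T Y w) (hne : w' ≠ [])
    (hsub : w' ⊆ w) (h : realize w' = realize w) : Permutator T Y w' :=
  ⟨⟨hne, fun f hf => hw.1.2 f (hsub hf)⟩, h ▸ hw.2⟩

variable (T Y) in
def MinStraightProducts : Set (X → X) :=
  {s | ∃ L : List (List (X → X)), L ≠ [] ∧
    (∀ u ∈ L, MinPermutator T Y u ∧ IsStraight u) ∧ realize L.flatten = s}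

theorem realize_mem_minStraightProducts_of_minPermutator {w : List (X → X)}
    (hmin : MinPermutator T Y w) (hw : IsStraight w) :
    realize w ∈ MinStraightProducts T Y :=
  ⟨[w], List.cons_ne_nil _ _, by simpa using ⟨hmin, hw⟩, by simp⟩

theorem comp_mem_minStraightProducts {s t : X → X} (hs : s ∈ MinStraightProducts T Y)
    (ht : t ∈ MinStraightProducts T Y) : t ∘ s ∈ MinStraightProducts T Y := by
  obtain ⟨L, hL, hLmin, rfl⟩ := hs
  obtain ⟨M, -, hMmin, rfl⟩ := ht
  refine ⟨L ++ M, by simp [hL], ?_, by rw [List.flatten_append, realize_append]⟩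
  intro u hu
  exact (List.mem_append.1 hu).elim (hLmin u) (hMmin u)

theorem realize_mem_minStraightProducts_of_permutator {w : List (X → X)}
    (hw : Permutator T Y w) : realize w ∈ MinStraightProducts T Y := by
  induction hlen : w.length using Nat.strong_induction_on generalizing w with
  | _ n ih =>
  subst hlen
  by_cases hfac : ∃ u v, w = u ++ v ∧ Permutator T Y u ∧ Permutator T Y v
  · obtain ⟨u, v, rfl, hu, hv⟩ := hfac
    have hu_pos := List.length_pos_iff.2 hu.1.1
    have hv_pos := List.length_pos_iff.2 hv.1.1
    have hlen := List.length_append (as := u) (bs := v)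
    rw [realize_append]
    exact comp_mem_minStraightProducts (ih _ (by omega) hu rfl) (ih _ (by omega) hv rfl)
  by_cases hstraight : IsStraight w
  · exact realize_mem_minStraightProducts_of_minPermutator ⟨hw, hfac⟩ hstraight
  obtain ⟨w', hne, hsub, hshorter, heq⟩ := exists_shorter_of_not_isStraight hstraight
  exact heq ▸ ih _ hshorter (hw.of_subset hne hsub heq) rfl

end

theorem permSet_realized_by_minimal_straight_general
    (X : Type*) (T : Finset (X → X)) (Y : Set X) :
    ∀ s ∈ PermSet T Y, ∃ L : List (List (X → X)), L ≠ [] ∧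
      (∀ u ∈ L, MinPermutator T Y u ∧ IsStraight u) ∧ realize L.flatten = s := by
  rintro s ⟨⟨w, hw, rfl⟩, hY⟩
  exact realize_mem_minStraightProducts_of_permutator ⟨hw, hY⟩

/-- Every transformation in `Perm(Y)` is realized by some concatenation of finitely many
minimal straight permutator words of `Y`. -/
theorem permSet_realized_by_minimal_straight
    (X : Type*) [Fintype X] [Nonempty X] (T : Finset (X → X)) (Y : Set X) :
    ∀ s ∈ PermSet T Y, ∃ L : List (List (X → X)), L ≠ [] ∧
      (∀ u ∈ L, MinPermutator T Y u ∧ IsStraight u) ∧ realize L.flatten = s :=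
  permSet_realized_by_minimal_straight_general X T Y
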